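/- arXiv:2605.22215 — 3 statements merged into one kernel-verified Lean document; each statement's English description precedes it below -/
import Mathlib

section
/- Chen's identity for level one and two: if Z is the concatenation of paths X : [a,b] → ℝ^d and Y : [b,c] → ℝ^d (with Y starting where X ends), then the level-1 term of Z equals S¹(X) + S¹(Y), and the level-2 term satisfies S²(Z) = S²(X) + S¹(X) ⊗ S¹(Y) + S²(Y). -/
noncomputable section

/-- The Riemann–Stieltjes sum of `f` against the integrator `g`, for a partition
`π` with left-endpoint tags. -/
def RSSum (f g : ℝ → ℝ) {n : ℕ} (π : Fin (n + 1) → ℝ) : ℝ :=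
  ∑ i : Fin n, f (π i.castSucc) * (g (π i.succ) - g (π i.castSucc))

/-- `π` is a partition of the interval `[a, b]`. -/
def IsPartition (a b : ℝ) {n : ℕ} (π : Fin (n + 1) → ℝ) : Prop :=
  Monotone π ∧ π 0 = a ∧ π (Fin.last n) = b

/-- The mesh of a partition. -/
def mesh {n : ℕ} (π : Fin (n + 1) → ℝ) : ℝ :=
  ⨆ i : Fin n, (π i.succ - π i.castSucc)

/-- `v` is the Riemann–Stieltjes integral `∫_a^b f dg`: Riemann–Stieltjes sums converge
to `v` as the mesh of the partition tends to `0`. -/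
def IsRSIntegral (f g : ℝ → ℝ) (a b : ℝ) (v : ℝ) : Prop :=
  ∀ ε > 0, ∃ δ > 0, ∀ (n : ℕ) (π : Fin (n + 1) → ℝ),
    IsPartition a b π → mesh π < δ → |RSSum f g π - v| < ε

/-- `IsIterIntegral d X a k w g` says that `g u` is, for every upper limit `u`, the level-`k`
iterated integral with multi-index `w = (i₁, …, i_k)` of the path `X` started at `a`:
`g u = ∫_{a < t₁ < ⋯ < t_k < u} dX^{i₁}_{t₁} ⋯ dX^{i_k}_{t_k}`,
defined recursively via Riemann–Stieltjes integration of the previous level against the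
coordinate `X^{i_k}`.  The coordinate functions `w ↦ g` for all multi-indices `w` of length `k`
are exactly the entries of the level-`k` tensor of the signature. -/
inductive IsIterIntegral (d : ℕ) (X : ℝ → Fin d → ℝ) (a : ℝ) :
    (k : ℕ) → (Fin k → Fin d) → (ℝ → ℝ) → Prop
  | zero : IsIterIntegral d X a 0 Fin.elim0 (fun _ => 1)
  | succ {k : ℕ} {w : Fin k → Fin d} {f : ℝ → ℝ} (i : Fin d) (g : ℝ → ℝ) :
      IsIterIntegral d X a k w f →
      (∀ u : ℝ, IsRSIntegral f (fun t => X t i) a u (g u)) →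
      IsIterIntegral d X a (k + 1) (Fin.snoc w i) g

namespace ChenAux

lemma eq_of_forall_abs_sub_lt {x y : ℝ} (h : ∀ ε > 0, |x - y| < ε) : x = y := by
  by_contra hne
  exact lt_irrefl _ (h _ (abs_pos.2 (sub_ne_zero.2 hne)))

/-- ℕ-indexed view of a partition. -/
def np {n : ℕ} (π : Fin (n + 1) → ℝ) (k : ℕ) : ℝ :=
  π ⟨min k n, Nat.lt_succ_of_le (min_le_right _ _)⟩

lemma np_eq {n : ℕ} (π : Fin (n + 1) → ℝ) {k : ℕ} (hk : k ≤ n) :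
    np π k = π ⟨k, Nat.lt_succ_of_le hk⟩ := by
  simp [np, min_eq_left hk]

lemma RSSum_eq {n : ℕ} (f g : ℝ → ℝ) (π : Fin (n + 1) → ℝ) :
    RSSum f g π = ∑ k ∈ Finset.range n,
      f (np π k) * (g (np π (k + 1)) - g (np π k)) := by
  rw [RSSum, ← Fin.sum_univ_eq_sum_range]
  refine Finset.sum_congr rfl fun k _ => ?_
  rw [np_eq π (le_of_lt k.isLt), np_eq π k.isLt]
  rfl

lemma RSSum_one {n : ℕ} (g : ℝ → ℝ) (π : Fin (n + 1) → ℝ) :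
    RSSum (fun _ => 1) g π = g (π (Fin.last n)) - g (π 0) := by
  rw [RSSum_eq]
  simp only [one_mul]
  rw [Finset.sum_range_sub (fun k => g (np π k))]
  rw [np_eq π le_rfl, np_eq π (Nat.zero_le n)]
  rfl

lemma increment_le_mesh {n : ℕ} (π : Fin (n + 1) → ℝ) (k : Fin n) :
    π k.succ - π k.castSucc ≤ mesh π := by
  unfold mesh
  exact le_ciSup (f := fun i : Fin n => π i.succ - π i.castSucc)
    (Set.Finite.bddAbove (Set.finite_range _)) k

lemma mesh_lt_of_le {n : ℕ} {π : Fin (n + 1) → ℝ} {δ M : ℝ}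
    (hM : 0 ≤ M) (hMδ : M < δ)
    (h : ∀ k : Fin n, π k.succ - π k.castSucc ≤ M) : mesh π < δ :=
  lt_of_le_of_lt (Real.iSup_le h hM) hMδ

lemma exists_partition (a u : ℝ) (hau : a ≤ u) {δ : ℝ} (hδ : 0 < δ) :
    ∃ (n : ℕ) (π : Fin (n + 1) → ℝ), IsPartition a u π ∧ mesh π < δ := by
  set n : ℕ := ⌈(u - a) / δ⌉₊ + 1 with hn
  have hnpos : 0 < n := Nat.succ_pos _
  have hlt : (u - a) / δ < n := by
    have := Nat.le_ceil ((u - a) / δ)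
    have : ((⌈(u - a) / δ⌉₊ : ℝ)) < n := by exact_mod_cast Nat.lt_succ_self _
    linarith [Nat.le_ceil ((u - a) / δ)]
  have hnR : (0 : ℝ) < n := by exact_mod_cast hnpos
  set s : ℝ := (u - a) / n with hs
  have hs0 : 0 ≤ s := div_nonneg (by linarith) hnR.le
  have hsδ : s < δ := by
    rw [hs, div_lt_iff₀ hnR]
    have : u - a < δ * n := by
      have := (div_lt_iff₀ hδ).mp hlt
      linarith
    linarith
  refine ⟨n, fun k => a + k.val * s, ⟨?_, ?_, ?_⟩, ?_⟩
  · intro k l hkl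
    have : (k.val : ℝ) ≤ l.val := by exact_mod_cast hkl
    have := mul_le_mul_of_nonneg_right this hs0
    show a + (k.val : ℝ) * s ≤ a + (l.val : ℝ) * s
    linarith
  · simp
  · show a + (n : ℝ) * s = u
    rw [hs, mul_div_cancel₀ _ (ne_of_gt hnR)]
    ring
  · refine mesh_lt_of_le hs0 hsδ fun k => ?_
    show a + ((k.val + 1 : ℕ) : ℝ) * s - (a + (k.val : ℝ) * s) ≤ s
    push_cast
    ring_nf
    linarith

lemma partition_mem {a b : ℝ} {n : ℕ} {π : Fin (n + 1) → ℝ}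
    (h : IsPartition a b π) (k : Fin (n + 1)) : a ≤ π k ∧ π k ≤ b :=
  ⟨h.2.1 ▸ h.1 (Fin.zero_le k), h.2.2 ▸ h.1 (Fin.le_last k)⟩

lemma level_one_val {d : ℕ} {X : ℝ → Fin d → ℝ} {a : ℝ} {w : Fin 1 → Fin d} {g : ℝ → ℝ}
    (h : IsIterIntegral d X a 1 w g) {u : ℝ} (hau : a ≤ u) :
    g u = X u (w 0) - X a (w 0) := by
  cases h with
  | succ i g h0 hint =>
    cases h0
    have hw : (Fin.snoc Fin.elim0 i : Fin 1 → Fin d) 0 = i := by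
      simp [Fin.snoc]
    rw [hw]
    apply eq_of_forall_abs_sub_lt
    intro ε hε
    obtain ⟨δ, hδ, hP⟩ := hint u ε hε
    obtain ⟨n, π, hπ, hmesh⟩ := exists_partition a u hau hδ
    have := hP n π hπ hmesh
    rw [RSSum_one, hπ.2.1, hπ.2.2] at this
    rwa [abs_sub_comm] at this

lemma level_two_val {d : ℕ} {X : ℝ → Fin d → ℝ} {a : ℝ} {w : Fin 2 → Fin d} {g : ℝ → ℝ}
    (h : IsIterIntegral d X a 2 w g) :
    ∃ f : ℝ → ℝ, (∀ u, a ≤ u → f u = X u (w 0) - X a (w 0)) ∧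
      ∀ u, IsRSIntegral f (fun t => X t (w 1)) a u (g u) := by
  cases h with
  | @succ k w1 f i g h1 hint =>
    refine ⟨f, fun u hu => ?_, fun u => ?_⟩
    · have h0 : (Fin.snoc w1 i : Fin 2 → Fin d) 0 = w1 0 := by
        have e : (0 : Fin 2) = Fin.castSucc (0 : Fin 1) := rfl
        rw [e, Fin.snoc_castSucc]
      rw [h0]
      exact level_one_val h1 hu
    · have h1' : (Fin.snoc w1 i : Fin 2 → Fin d) 1 = i := by
        simp [Fin.snoc]
      rw [h1']
      exact hint u

/-- Concatenation of two partitions. -/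
def cat {n m : ℕ} (π₁ : Fin (n + 1) → ℝ) (π₂ : Fin (m + 1) → ℝ) : Fin (n + m + 1) → ℝ :=
  fun k => if h : k.val ≤ n then π₁ ⟨k.val, Nat.lt_succ_of_le h⟩
    else π₂ ⟨k.val - n, by omega⟩

lemma cat_left {n m : ℕ} (π₁ : Fin (n + 1) → ℝ) (π₂ : Fin (m + 1) → ℝ)
    {k : Fin (n + m + 1)} (hk : k.val ≤ n) :
    cat π₁ π₂ k = π₁ ⟨k.val, Nat.lt_succ_of_le hk⟩ := by
  simp [cat, hk]

lemma cat_right {n m : ℕ} {π₁ : Fin (n + 1) → ℝ} {π₂ : Fin (m + 1) → ℝ}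
    (hb : π₁ (Fin.last n) = π₂ 0) {k : Fin (n + m + 1)} (hk : n ≤ k.val) :
    cat π₁ π₂ k = π₂ ⟨k.val - n, by omega⟩ := by
  rcases eq_or_lt_of_le hk with h | h
  · have hk' : k.val ≤ n := le_of_eq h.symm
    rw [cat_left π₁ π₂ hk']
    have e1 : (⟨k.val, Nat.lt_succ_of_le hk'⟩ : Fin (n + 1)) = Fin.last n := by
      exact Fin.ext (by simp [← h])
    have e2 : (⟨k.val - n, by omega⟩ : Fin (m + 1)) = 0 := by
      exact Fin.ext (by simp [← h])
    rw [e1, e2, hb]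
  · simp [cat, Nat.not_le.mpr h]

lemma np_cat_left {n m : ℕ} (π₁ : Fin (n + 1) → ℝ) (π₂ : Fin (m + 1) → ℝ)
    {k : ℕ} (hk : k ≤ n) : np (cat π₁ π₂) k = np π₁ k := by
  rw [np_eq _ (show k ≤ n + m by omega), np_eq _ hk]
  exact cat_left π₁ π₂ hk

lemma np_cat_right {n m : ℕ} {π₁ : Fin (n + 1) → ℝ} {π₂ : Fin (m + 1) → ℝ}
    (hb : π₁ (Fin.last n) = π₂ 0) {k : ℕ} (hk : k ≤ m) :
    np (cat π₁ π₂) (n + k) = np π₂ k := by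
  rw [np_eq _ (show n + k ≤ n + m by omega), np_eq _ hk]
  rw [cat_right hb (by simp)]
  congr 1
  exact Fin.ext (by simp)

lemma cat_partition {n m : ℕ} {π₁ : Fin (n + 1) → ℝ} {π₂ : Fin (m + 1) → ℝ} {a b c : ℝ}
    (h1 : IsPartition a b π₁) (h2 : IsPartition b c π₂) :
    IsPartition a c (cat π₁ π₂) := by
  have hb : π₁ (Fin.last n) = π₂ 0 := by rw [h1.2.2, h2.2.1]
  refine ⟨?_, ?_, ?_⟩
  · rw [Fin.monotone_iff_le_succ]
    intro k
    by_cases h : k.val + 1 ≤ n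
    · rw [cat_left π₁ π₂ (show (Fin.castSucc k).val ≤ n by
          simp only [Fin.coe_castSucc]; omega),
        cat_left π₁ π₂ (show (Fin.succ k).val ≤ n by
          simp only [Fin.val_succ]; omega)]
      exact h1.1 (by simp [Fin.le_def])
    · have hk : n ≤ k.val := by omega
      rw [cat_right hb (show n ≤ (Fin.castSucc k).val by simpa using hk),
        cat_right hb (show n ≤ (Fin.succ k).val by simp only [Fin.val_succ]; omega)]
      apply h2.1
      simp only [Fin.le_def, Fin.coe_castSucc, Fin.val_succ]
      omega
  · rw [cat_left π₁ π₂ (by simp : ((0 : Fin (n + m + 1))).val ≤ n)]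
    rw [← h1.2.1]
    congr 1
  · rw [cat_right hb (by simp [Fin.last] : n ≤ (Fin.last (n + m)).val)]
    rw [← h2.2.2]
    congr 1
    exact Fin.ext (by simp [Fin.last])

lemma cat_mesh_lt {n m : ℕ} {π₁ : Fin (n + 1) → ℝ} {π₂ : Fin (m + 1) → ℝ} {a b c δ : ℝ}
    (h1 : IsPartition a b π₁) (h2 : IsPartition b c π₂) (hδ : 0 < δ)
    (hm1 : mesh π₁ < δ) (hm2 : mesh π₂ < δ) : mesh (cat π₁ π₂) < δ := by
  have hb : π₁ (Fin.last n) = π₂ 0 := by rw [h1.2.2, h2.2.1]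
  refine mesh_lt_of_le (M := max 0 (max (mesh π₁) (mesh π₂))) (le_max_left _ _)
    (by simp [hδ, hm1, hm2]) ?_
  intro k
  by_cases h : k.val + 1 ≤ n
  · have e1 : cat π₁ π₂ k.castSucc = π₁ ⟨k.val, by omega⟩ :=
      cat_left π₁ π₂ (by simp; omega)
    have e2 : cat π₁ π₂ k.succ = π₁ ⟨k.val + 1, by omega⟩ :=
      cat_left π₁ π₂ (by simpa using h)
    rw [e1, e2]
    have : π₁ (Fin.succ ⟨k.val, by omega⟩) - π₁ (Fin.castSucc ⟨k.val, by omega⟩) ≤ mesh π₁ :=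
      increment_le_mesh π₁ ⟨k.val, by omega⟩
    have e3 : Fin.succ (⟨k.val, by omega⟩ : Fin n) = ⟨k.val + 1, by omega⟩ := Fin.ext (by simp)
    have e4 : Fin.castSucc (⟨k.val, by omega⟩ : Fin n) = ⟨k.val, by omega⟩ := Fin.ext (by simp)
    rw [e3, e4] at this
    calc π₁ ⟨k.val + 1, by omega⟩ - π₁ ⟨k.val, by omega⟩ ≤ mesh π₁ := this
      _ ≤ max 0 (max (mesh π₁) (mesh π₂)) := le_max_of_le_right (le_max_left _ _)
  · have hk : n ≤ k.val := by omega
    have hkm : k.val - n < m := by omega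
    have e1 : cat π₁ π₂ k.castSucc = π₂ ⟨k.val - n, by omega⟩ :=
      cat_right hb (by simpa using hk)
    have e2 : cat π₁ π₂ k.succ = π₂ ⟨k.val + 1 - n, by omega⟩ := by
      rw [cat_right hb (show n ≤ (Fin.succ k).val by simp only [Fin.val_succ]; omega)]
      congr 1
    rw [e1, e2]
    have : π₂ (Fin.succ ⟨k.val - n, hkm⟩) - π₂ (Fin.castSucc ⟨k.val - n, hkm⟩) ≤ mesh π₂ :=
      increment_le_mesh π₂ ⟨k.val - n, hkm⟩
    have e3 : Fin.succ (⟨k.val - n, hkm⟩ : Fin m) = ⟨k.val + 1 - n, by omega⟩ :=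
      Fin.ext (by simp; omega)
    have e4 : Fin.castSucc (⟨k.val - n, hkm⟩ : Fin m) = ⟨k.val - n, by omega⟩ := Fin.ext (by simp)
    rw [e3, e4] at this
    calc π₂ ⟨k.val + 1 - n, by omega⟩ - π₂ ⟨k.val - n, by omega⟩ ≤ mesh π₂ := this
      _ ≤ max 0 (max (mesh π₁) (mesh π₂)) := le_max_of_le_right (le_max_right _ _)

lemma cat_RSSum {n m : ℕ} {π₁ : Fin (n + 1) → ℝ} {π₂ : Fin (m + 1) → ℝ}
    (hb : π₁ (Fin.last n) = π₂ 0) (f g : ℝ → ℝ) :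
    RSSum f g (cat π₁ π₂) = RSSum f g π₁ + RSSum f g π₂ := by
  rw [RSSum_eq f g (cat π₁ π₂), RSSum_eq f g π₁, RSSum_eq f g π₂]
  rw [Finset.sum_range_add]
  congr 1
  · refine Finset.sum_congr rfl fun k hk => ?_
    rw [Finset.mem_range] at hk
    rw [np_cat_left π₁ π₂ (by omega), np_cat_left π₁ π₂ (by omega)]
  · refine Finset.sum_congr rfl fun k hk => ?_
    rw [Finset.mem_range] at hk
    have e : n + k + 1 = n + (k + 1) := by omega
    rw [e, np_cat_right hb (by omega), np_cat_right hb (by omega)]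

lemma RSSum_congr {n : ℕ} {π : Fin (n + 1) → ℝ} {f f' g g' : ℝ → ℝ}
    (hf : ∀ k : Fin (n + 1), f (π k) = f' (π k))
    (hg : ∀ k : Fin (n + 1), g (π k) = g' (π k)) :
    RSSum f g π = RSSum f' g' π := by
  unfold RSSum
  exact Finset.sum_congr rfl fun k _ => by rw [hf, hg, hg]

lemma RSSum_add_const {n : ℕ} (F : ℝ → ℝ) (K : ℝ) (g : ℝ → ℝ) (π : Fin (n + 1) → ℝ) :
    RSSum (fun t => F t + K) g π
      = RSSum F g π + K * (g (π (Fin.last n)) - g (π 0)) := by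
  rw [← RSSum_one g π]
  unfold RSSum
  rw [Finset.mul_sum, ← Finset.sum_add_distrib]
  exact Finset.sum_congr rfl fun k _ => by ring

end ChenAux

/-- Chen's identity for levels one and two: if `Z` is the concatenation of paths
`X : [a,b] → ℝ^d` and `Y : [b,c] → ℝ^d` (with `Y` starting where `X` ends), then
`S¹(Z) = S¹(X) + S¹(Y)` coordinatewise, and
`S²(Z)_{ij} = S²(X)_{ij} + S¹(X)_i * S¹(Y)_j + S²(Y)_{ij}`. -/
theorem chen_identity_level_one_two (d : ℕ) (X Y Z : ℝ → Fin d → ℝ) (a b c : ℝ)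
    (hab : a ≤ b) (hbc : b ≤ c)
    (hXcont : ContinuousOn X (Set.Icc a b)) (hXBV : BoundedVariationOn X (Set.Icc a b))
    (hYcont : ContinuousOn Y (Set.Icc b c)) (hYBV : BoundedVariationOn Y (Set.Icc b c))
    (hmatch : Y b = X b)
    (hZ : ∀ t, Z t = if t ≤ b then X t else Y t)
    (i j : Fin d) (gX1i gY1i gY1j gZ1i gX2 gY2 gZ2 : ℝ → ℝ)
    (hX1i : IsIterIntegral d X a 1 (fun _ => i) gX1i)
    (hY1i : IsIterIntegral d Y b 1 (fun _ => i) gY1i)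
    (hY1j : IsIterIntegral d Y b 1 (fun _ => j) gY1j)
    (hZ1i : IsIterIntegral d Z a 1 (fun _ => i) gZ1i)
    (hX2 : IsIterIntegral d X a 2 ![i, j] gX2)
    (hY2 : IsIterIntegral d Y b 2 ![i, j] gY2)
    (hZ2 : IsIterIntegral d Z a 2 ![i, j] gZ2) :
    gZ1i c = gX1i b + gY1i c ∧
      gZ2 c = gX2 b + gX1i b * gY1j c + gY2 c := by
  have hac : a ≤ c := hab.trans hbc
  have hZleft : ∀ t, t ≤ b → Z t = X t := fun t ht => by rw [hZ t, if_pos ht]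
  have hZright : ∀ t, b ≤ t → Z t = Y t := by
    intro t ht
    rw [hZ t]
    by_cases h : t ≤ b
    · have hb : t = b := le_antisymm h ht
      subst hb
      rw [if_pos le_rfl, hmatch]
    · rw [if_neg h]
  have hZa : Z a = X a := hZleft a hab
  have hZc : Z c = Y c := hZright c hbc
  have hYbi : Y b i = X b i := congrFun hmatch i
  have e1 : gZ1i c = Z c i - Z a i := ChenAux.level_one_val hZ1i hac
  have e2 : gX1i b = X b i - X a i := ChenAux.level_one_val hX1i hab
  have e3 : gY1i c = Y c i - Y b i := ChenAux.level_one_val hY1i hbc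
  have e4 : gY1j c = Y c j - Y b j := ChenAux.level_one_val hY1j hbc
  constructor
  · rw [e1, e2, e3, hZc, hZa, hYbi]; ring
  · obtain ⟨fZ, hfZval, hfZint⟩ := ChenAux.level_two_val hZ2
    obtain ⟨fX, hfXval, hfXint⟩ := ChenAux.level_two_val hX2
    obtain ⟨fY, hfYval, hfYint⟩ := ChenAux.level_two_val hY2
    simp only [Matrix.cons_val_zero, Matrix.cons_val_one, Matrix.head_cons]
      at hfZval hfXval hfYval hfZint hfXint hfYint
    apply ChenAux.eq_of_forall_abs_sub_lt
    intro ε hε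
    have hε3 : 0 < ε / 3 := by linarith
    obtain ⟨δ₁, hδ₁, hP₁⟩ := hfZint c (ε / 3) hε3
    obtain ⟨δ₂, hδ₂, hP₂⟩ := hfXint b (ε / 3) hε3
    obtain ⟨δ₃, hδ₃, hP₃⟩ := hfYint c (ε / 3) hε3
    have hδ : 0 < min δ₁ (min δ₂ δ₃) := by positivity
    obtain ⟨n, π₁, hπ₁, hm₁⟩ := ChenAux.exists_partition a b hab hδ
    obtain ⟨m, π₂, hπ₂, hm₂⟩ := ChenAux.exists_partition b c hbc hδ
    have hb' : π₁ (Fin.last n) = π₂ 0 := by rw [hπ₁.2.2, hπ₂.2.1]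
    have hA := hP₁ _ _ (ChenAux.cat_partition hπ₁ hπ₂)
      (ChenAux.cat_mesh_lt hπ₁ hπ₂ hδ₁ (lt_of_lt_of_le hm₁ (min_le_left _ _))
        (lt_of_lt_of_le hm₂ (min_le_left _ _)))
    have hB := hP₂ n π₁ hπ₁
      (lt_of_lt_of_le hm₁ (le_trans (min_le_right _ _) (min_le_left _ _)))
    have hC := hP₃ m π₂ hπ₂
      (lt_of_lt_of_le hm₂ (le_trans (min_le_right _ _) (min_le_right _ _)))
    set K : ℝ := X b i - X a i with hK
    have hsplit : RSSum fZ (fun t => Z t j) (ChenAux.cat π₁ π₂)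
        = RSSum fX (fun t => X t j) π₁
          + (RSSum fY (fun t => Y t j) π₂ + K * (Y c j - Y b j)) := by
      rw [ChenAux.cat_RSSum hb']
      congr 1
      · apply ChenAux.RSSum_congr
        · intro k
          obtain ⟨hk1, hk2⟩ := ChenAux.partition_mem hπ₁ k
          rw [hfZval _ hk1, hfXval _ hk1, hZleft _ hk2, hZa]
        · intro k
          obtain ⟨hk1, hk2⟩ := ChenAux.partition_mem hπ₁ k
          rw [hZleft _ hk2]
      · have hc1 : RSSum fZ (fun t => Z t j) π₂
            = RSSum (fun t => fY t + K) (fun t => Y t j) π₂ := by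
          apply ChenAux.RSSum_congr
          · intro k
            obtain ⟨hk1, hk2⟩ := ChenAux.partition_mem hπ₂ k
            rw [hfZval _ (hab.trans hk1), hfYval _ hk1, hZright _ hk1, hZa, hK, hYbi]
            ring
          · intro k
            obtain ⟨hk1, hk2⟩ := ChenAux.partition_mem hπ₂ k
            rw [hZright _ hk1]
        rw [hc1, ChenAux.RSSum_add_const, hπ₂.2.2, hπ₂.2.1]
    rw [hsplit] at hA
    have egoal : gZ2 c - (gX2 b + gX1i b * gY1j c + gY2 c)
        = -((RSSum fX (fun t => X t j) π₁
              + (RSSum fY (fun t => Y t j) π₂ + K * (Y c j - Y b j))) - gZ2 c)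
          + (RSSum fX (fun t => X t j) π₁ - gX2 b)
          + (RSSum fY (fun t => Y t j) π₂ - gY2 c) := by
      rw [e2, e4, hK]; ring
    rw [egoal]
    calc |_ + _ + _| ≤ |-((RSSum fX (fun t => X t j) π₁
              + (RSSum fY (fun t => Y t j) π₂ + K * (Y c j - Y b j))) - gZ2 c)|
          + |RSSum fX (fun t => X t j) π₁ - gX2 b|
          + |RSSum fY (fun t => Y t j) π₂ - gY2 c| := abs_add_three _ _ _
      _ < ε := by rw [abs_neg]; linarith
end
end

section
/- If the moment generating functions of two real random variables A and B exist and coincide on an open interval containing 0, then A and B are equal in distribution. -/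
/-!
The complex moment generating functions `z ↦ E[exp (z X)]` are holomorphic on the vertical strip
over the interval where the real ones are finite, and there they restrict to the real ones. By the
identity theorem they therefore agree on the whole strip, in particular on the imaginary axis,
where they are the characteristic functions, and characteristic functions determine the law.
-/

open MeasureTheory ProbabilityTheory Filter Set
open scoped Topology

lemma Complex.frequently_mem_image_ofReal_nhdsNE {U : Set ℝ} {t : ℝ} (hU : U ∈ 𝓝 t) :
    ∃ᶠ z in 𝓝[≠] (t : ℂ), z ∈ ((↑) : ℝ → ℂ) '' U := by
  have hreal : ∃ᶠ s in 𝓝[≠] t, s ∈ U := (eventually_nhdsWithin_of_eventually_nhds hU).frequently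
  exact (Complex.continuous_ofReal.continuousWithinAt.tendsto_nhdsWithin
    fun s hs ↦ by simpa using hs).frequently (hreal.mono fun s hs ↦ mem_image_of_mem _ hs)

namespace ProbabilityTheory

variable {Ω Ω' : Type*} {mΩ : MeasurableSpace Ω} {mΩ' : MeasurableSpace Ω'}
  {X : Ω → ℝ} {Y : Ω' → ℝ} {μ : Measure Ω} {μ' : Measure Ω'}

lemma eqOn_complexMGF_of_eqOn_mgf {U : Set ℝ} (hU : IsOpen U) (hUc : Convex ℝ U)
    (hX : U ⊆ integrableExpSet X μ) (hY : U ⊆ integrableExpSet Y μ')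
    (h : EqOn (mgf X μ) (mgf Y μ') U) :
    EqOn (complexMGF X μ) (complexMGF Y μ') {z | z.re ∈ U} := by
  obtain rfl | ⟨t, ht⟩ := U.eq_empty_or_nonempty
  · simp [EqOn]
  have hstrip {V : Set ℝ} (hUV : U ⊆ V) : {z : ℂ | z.re ∈ U} ⊆ {z | z.re ∈ interior V} :=
    fun _ hz ↦ interior_maximal hUV hU hz
  refine (analyticOnNhd_complexMGF.mono (hstrip hX)).eqOn_of_preconnected_of_frequently_eq
    (analyticOnNhd_complexMGF.mono (hstrip hY)) (hUc.linear_preimage Complex.reLm).isPreconnected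
    (z₀ := (t : ℂ)) (by simpa using ht) ?_
  refine (Complex.frequently_mem_image_ofReal_nhdsNE (hU.mem_nhds ht)).mono ?_
  rintro _ ⟨s, hs, rfl⟩
  rw [complexMGF_ofReal, complexMGF_ofReal, h hs]

lemma map_eq_of_eqOn_mgf [IsFiniteMeasure μ] [IsFiniteMeasure μ'] {U : Set ℝ} (hU : IsOpen U)
    (hUc : Convex ℝ U) (h0 : 0 ∈ U) (hXm : AEMeasurable X μ) (hYm : AEMeasurable Y μ')
    (hX : U ⊆ integrableExpSet X μ) (hY : U ⊆ integrableExpSet Y μ')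
    (h : EqOn (mgf X μ) (mgf Y μ') U) :
    μ.map X = μ'.map Y := by
  refine Measure.ext_of_charFun (funext fun t ↦ ?_)
  rw [← complexMGF_mul_I hXm, ← complexMGF_mul_I hYm]
  exact eqOn_complexMGF_of_eqOn_mgf hU hUc hX hY h (by simpa using h0)

end ProbabilityTheory

/-- If the moment generating functions of two real random variables `A` and `B` exist
(are finite) and coincide on an open interval containing `0`, then `A` and `B` are equal
in distribution. -/
theorem eq_in_distribution_of_mgf_eq {Ω : Type*} [MeasurableSpace Ω]
    (μ : Measure Ω) [IsProbabilityMeasure μ] (A B : Ω → ℝ)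
    (hA : Measurable A) (hB : Measurable B) (δ : ℝ) (hδ : 0 < δ)
    (hIA : ∀ t ∈ Set.Ioo (-δ) δ, Integrable (fun ω => Real.exp (t * A ω)) μ)
    (hIB : ∀ t ∈ Set.Ioo (-δ) δ, Integrable (fun ω => Real.exp (t * B ω)) μ)
    (heq : ∀ t ∈ Set.Ioo (-δ) δ, mgf A μ t = mgf B μ t) :
    μ.map A = μ.map B :=
  map_eq_of_eqOn_mgf isOpen_Ioo (convex_Ioo _ _) ⟨neg_neg_of_pos hδ, hδ⟩ hA.aemeasurable
    hB.aemeasurable hIA hIB heq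
end

section
/- At the optimal discriminator, the GAN value function equals 2·JSD(p_data ‖ p_g) − log 4, where JSD is the Jensen–Shannon divergence; in particular the value is minimized, equal to −log 4, exactly when p_data = p_g. -/
open Finset Real

/-! Each Kullback–Leibler term of `JSD` differs from the matching term of `C` by exactly
`log 2`, because the mixture `(p + q)/2` carries the factor `1/2`; hence `C = 2 JSD − log 4`.
By Gibbs' inequality `a − b ≤ a log (a/b)` (strict for `a ≠ b`), summed over the support,
both divergences are nonnegative and vanish only when `p = (p + q)/2 = q`. -/

lemma sub_le_mul_log_div {a b : ℝ} (ha : 0 ≤ a) (hb : 0 ≤ b) (hab : b = 0 → a = 0) :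
    a - b ≤ a * log (a / b) := by
  rcases hb.eq_or_lt with rfl | hb
  · simp [hab rfl]
  · calc a - b = b * (a / b - 1) := by field_simp
      _ ≤ b * (a / b * log (a / b)) :=
        mul_le_mul_of_nonneg_left (self_sub_one_le_mul_log (by positivity)) hb.le
      _ = a * log (a / b) := by field_simp

lemma sub_lt_mul_log_div {a b : ℝ} (ha : 0 ≤ a) (hb : 0 ≤ b) (hab : b = 0 → a = 0)
    (hne : a ≠ b) :
    a - b < a * log (a / b) := by
  rcases hb.eq_or_lt with rfl | hb
  · exact absurd (hab rfl) hne
  · have hab' : a / b ≠ 1 := fun h => hne ((div_eq_one_iff_eq hb.ne').mp h)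
    calc a - b = b * (a / b - 1) := by field_simp
      _ < b * (a / b * log (a / b)) :=
        mul_lt_mul_of_pos_left (self_sub_one_lt_mul_log (by positivity) hab') hb
      _ = a * log (a / b) := by field_simp

lemma mul_log_div_half {a c : ℝ} (h : a ≠ 0 → c ≠ 0) :
    a * log (a / (c / 2)) = a * log (a / c) + a * log 2 := by
  rcases eq_or_ne a 0 with rfl | ha
  · simp
  · rw [div_div_eq_mul_div, mul_div_right_comm, log_mul (div_ne_zero ha (h ha)) two_ne_zero]
    ring

section Divergences

variable {α : Type*} [Fintype α]

noncomputable def discreteKL (p m : α → ℝ) : ℝ := ∑ x, p x * log (p x / m x)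

noncomputable def discreteJSD (p q : α → ℝ) : ℝ :=
  (1 / 2) * discreteKL p (fun x => (p x + q x) / 2) +
    (1 / 2) * discreteKL q (fun x => (p x + q x) / 2)

variable {p q m : α → ℝ}

theorem discreteKL_nonneg (hp : ∀ x, 0 ≤ p x) (hm : ∀ x, 0 ≤ m x)
    (hpm : ∀ x, m x = 0 → p x = 0) (hsum : ∑ x, p x = ∑ x, m x) :
    0 ≤ discreteKL p m := by
  have := sum_le_sum fun x (_ : x ∈ univ) => sub_le_mul_log_div (hp x) (hm x) (hpm x)
  rwa [sum_sub_distrib, hsum, sub_self] at this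

theorem discreteKL_eq_zero_iff (hp : ∀ x, 0 ≤ p x) (hm : ∀ x, 0 ≤ m x)
    (hpm : ∀ x, m x = 0 → p x = 0) (hsum : ∑ x, p x = ∑ x, m x) :
    discreteKL p m = 0 ↔ p = m := by
  constructor
  · intro h0
    by_contra hne
    obtain ⟨x₀, hx₀⟩ := Function.ne_iff.mp hne
    have := sum_lt_sum (fun x (_ : x ∈ univ) => sub_le_mul_log_div (hp x) (hm x) (hpm x))
      ⟨x₀, mem_univ x₀, sub_lt_mul_log_div (hp x₀) (hm x₀) (hpm x₀) hx₀⟩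
    rw [sum_sub_distrib, hsum, sub_self] at this
    exact this.ne' h0
  · rintro rfl
    simp [discreteKL]

theorem discreteKL_half {c : α → ℝ} (hpc : ∀ x, p x ≠ 0 → c x ≠ 0) (hp1 : ∑ x, p x = 1) :
    discreteKL p (fun x => c x / 2) = ∑ x, p x * log (p x / c x) + log 2 := by
  simp only [discreteKL, mul_log_div_half (hpc _), sum_add_distrib, ← sum_mul, hp1, one_mul]

section Mixture

variable (hp : ∀ x, 0 ≤ p x) (hq : ∀ x, 0 ≤ q x)
include hp hq

theorem discreteKL_mixture_nonneg (hsum : ∑ x, p x = ∑ x, q x) :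
    0 ≤ discreteKL p (fun x => (p x + q x) / 2) :=
  discreteKL_nonneg hp (fun x => by linarith [hp x, hq x]) (fun x _ => by linarith [hp x, hq x])
    (by rw [← sum_div, sum_add_distrib, ← hsum, add_self_div_two])

theorem discreteKL_mixture_eq_zero_iff (hsum : ∑ x, p x = ∑ x, q x) :
    discreteKL p (fun x => (p x + q x) / 2) = 0 ↔ p = fun x => (p x + q x) / 2 :=
  discreteKL_eq_zero_iff hp (fun x => by linarith [hp x, hq x])
    (fun x _ => by linarith [hp x, hq x])
    (by rw [← sum_div, sum_add_distrib, ← hsum, add_self_div_two])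

theorem two_mul_discreteJSD_sub_log_four (hp1 : ∑ x, p x = 1) (hq1 : ∑ x, q x = 1) :
    2 * discreteJSD p q - log 4 =
      ∑ x, p x * log (p x / (p x + q x)) + ∑ x, q x * log (q x / (p x + q x)) := by
  have hlog4 : log 4 = 2 * log 2 := by
    rw [show (4 : ℝ) = 2 ^ 2 by norm_num, log_pow, Nat.cast_ofNat]
  rw [discreteJSD,
    discreteKL_half (fun x hx => (add_pos_of_pos_of_nonneg ((hp x).lt_of_ne' hx) (hq x)).ne') hp1,
    discreteKL_half (fun x hx => (add_pos_of_nonneg_of_pos (hp x) ((hq x).lt_of_ne' hx)).ne') hq1,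
    hlog4]
  ring

theorem discreteJSD_nonneg (hsum : ∑ x, p x = ∑ x, q x) : 0 ≤ discreteJSD p q := by
  have hKLp := discreteKL_mixture_nonneg hp hq hsum
  have hKLq := discreteKL_mixture_nonneg hq hp hsum.symm
  simp only [add_comm (q _)] at hKLq
  rw [discreteJSD]
  positivity

theorem discreteJSD_eq_zero_iff (hsum : ∑ x, p x = ∑ x, q x) :
    discreteJSD p q = 0 ↔ p = q := by
  have hKLp := discreteKL_mixture_eq_zero_iff hp hq hsum
  have hKLq := discreteKL_mixture_eq_zero_iff hq hp hsum.symm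
  have hKLp₀ := discreteKL_mixture_nonneg hp hq hsum
  have hKLq₀ := discreteKL_mixture_nonneg hq hp hsum.symm
  simp only [add_comm (q _)] at hKLq hKLq₀
  constructor
  · intro h
    rw [discreteJSD] at h
    exact (hKLp.mp (by linarith)).trans (hKLq.mp (by linarith)).symm
  · rintro rfl
    simp [discreteJSD, discreteKL, add_self_div_two]

end Mixture

end Divergences

/-- At the optimal discriminator, the GAN value
`C(p,q) = Σ p log(p/(p+q)) + Σ q log(q/(p+q))` equals `2 · JSD(p‖q) − log 4`, where
`JSD(p‖q) = ½ KL(p ‖ (p+q)/2) + ½ KL(q ‖ (p+q)/2)` is the Jensen–Shannon divergence;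
in particular `C` is minimized, with value `−log 4`, exactly when `p = q`. -/
theorem gan_value_JSD {α : Type*} [Fintype α] (p q : α → ℝ)
    (hp : ∀ x, 0 ≤ p x) (hq : ∀ x, 0 ≤ q x)
    (hp1 : ∑ x, p x = 1) (hq1 : ∑ x, q x = 1)
    (C JSD : ℝ)
    (hC : C = ∑ x, p x * Real.log (p x / (p x + q x)) +
              ∑ x, q x * Real.log (q x / (p x + q x)))
    (hJSD : JSD = (1 / 2) * ∑ x, p x * Real.log (p x / ((p x + q x) / 2)) +
                  (1 / 2) * ∑ x, q x * Real.log (q x / ((p x + q x) / 2))) :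
    C = 2 * JSD - Real.log 4 ∧ (-Real.log 4 ≤ C) ∧ (C = -Real.log 4 ↔ p = q) := by
  have hsum : ∑ x, p x = ∑ x, q x := hp1.trans hq1.symm
  have hJSD' : JSD = discreteJSD p q := hJSD
  rw [hC, ← two_mul_discreteJSD_sub_log_four hp hq hp1 hq1, hJSD']
  refine ⟨rfl, by linarith [discreteJSD_nonneg hp hq hsum], ?_⟩
  rw [← discreteJSD_eq_zero_iff hp hq hsum]
  constructor <;> intro h <;> linarith
end
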